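/- Let G and H be locally compact, second-countable, Hausdorff abelian topological groups with Haar measures, and equip G × H with the product Haar measure. If f ∈ K₂(G) and g ∈ K₂(H), then the tensor product f ⊙ g : G × H → ℂ, (f ⊙ g)(x, y) := f(x)·g(y), belongs to K₂(G × H). -/

import Mathlib

open MeasureTheory

/-- `K₂(G)`: the ℂ-linear span of convolutions `φ ⋆ ψ` of pairs of continuous,
compactly supported complex-valued functions on `G`, convolution taken w.r.t. `μ`. -/
noncomputable def K2 {G : Type*} [AddCommGroup G] [TopologicalSpace G] [MeasurableSpace G]
    (μ : Measure G) : Submodule ℂ (G → ℂ) :=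
  Submodule.span ℂ {h : G → ℂ | ∃ φ ψ : G → ℂ,
    Continuous φ ∧ HasCompactSupport φ ∧ Continuous ψ ∧ HasCompactSupport ψ ∧
    h = MeasureTheory.convolution φ ψ (ContinuousLinearMap.mul ℂ ℂ) μ}

/-!
The tensor product `(f, g) ↦ f ⊙ g` is bilinear, so it maps `span S × span T` into the span of
`{φ ⊙ ψ | φ ∈ S, ψ ∈ T}`. It therefore suffices to treat generators, and there Fubini gives
`(φ ⋆ ψ) ⊙ (φ' ⋆ ψ') = (φ ⊙ φ') ⋆ (ψ ⊙ ψ')`, a convolution of continuous compactly supported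
functions on `G × H`.
-/

section Tensor

variable {G H : Type*}

/-- `f ⊙ g`, as a bilinear map. -/
def tensorₗ (R : Type*) [CommSemiring R] : (G → R) →ₗ[R] (H → R) →ₗ[R] (G × H → R) :=
  (LinearMap.mul R (G × H → R)).compl₁₂ (LinearMap.funLeft R R Prod.fst)
    (LinearMap.funLeft R R Prod.snd)

lemma HasCompactSupport.tensor [TopologicalSpace G] [TopologicalSpace H] {R : Type*}
    [MulZeroClass R] {f : G → R} {g : H → R} (hf : HasCompactSupport f)
    (hg : HasCompactSupport g) : HasCompactSupport fun p : G × H => f p.1 * g p.2 := by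
  refine .intro' (hf.prod hg) ((isClosed_tsupport f).prod (isClosed_tsupport g)) ?_
  intro p hp
  rcases not_and_or.mp hp with hp | hp
  · rw [image_eq_zero_of_notMem_tsupport hp, zero_mul]
  · rw [image_eq_zero_of_notMem_tsupport hp, mul_zero]

lemma convolution_tensor {𝕜 : Type*} [RCLike 𝕜] [Sub G] [Sub H]
    [MeasurableSpace G] [MeasurableSpace H] (μ : Measure G) (ν : Measure H)
    [SFinite μ] [SFinite ν] (φ ψ : G → 𝕜) (φ' ψ' : H → 𝕜) (p : G × H) :
    convolution φ ψ (ContinuousLinearMap.mul 𝕜 𝕜) μ p.1 *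
        convolution φ' ψ' (ContinuousLinearMap.mul 𝕜 𝕜) ν p.2 =
      convolution (fun q : G × H => φ q.1 * φ' q.2) (fun q : G × H => ψ q.1 * ψ' q.2)
        (ContinuousLinearMap.mul 𝕜 𝕜) (μ.prod ν) p := by
  simp only [convolution, ContinuousLinearMap.mul_apply']
  rw [← integral_prod_mul]
  congr 1 with q
  exact mul_mul_mul_comm _ _ _ _

end Tensor

section K2

variable {G H : Type*} [AddCommGroup G] [TopologicalSpace G] [MeasurableSpace G]
  [AddCommGroup H] [TopologicalSpace H] [MeasurableSpace H]

def convGenerators (μ : Measure G) : Set (G → ℂ) :=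
  {h : G → ℂ | ∃ φ ψ : G → ℂ,
    Continuous φ ∧ HasCompactSupport φ ∧ Continuous ψ ∧ HasCompactSupport ψ ∧
    h = convolution φ ψ (ContinuousLinearMap.mul ℂ ℂ) μ}

lemma K2_eq_span_convGenerators (μ : Measure G) : K2 μ = Submodule.span ℂ (convGenerators μ) :=
  rfl

lemma image2_tensor_convGenerators_subset (μ : Measure G) (ν : Measure H)
    [SFinite μ] [SFinite ν] :
    Set.image2 (fun f g => tensorₗ ℂ f g) (convGenerators μ) (convGenerators ν) ⊆
      convGenerators (μ.prod ν) := by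
  rintro _ ⟨_, ⟨φ, ψ, hφ, hφs, hψ, hψs, rfl⟩, _, ⟨φ', ψ', hφ', hφ's, hψ', hψ's, rfl⟩, rfl⟩
  refine ⟨fun q => φ q.1 * φ' q.2, fun q => ψ q.1 * ψ' q.2,
    by fun_prop, hφs.tensor hφ's, by fun_prop, hψs.tensor hψ's, ?_⟩
  exact funext (convolution_tensor μ ν φ ψ φ' ψ')

lemma map₂_tensor_K2_le (μ : Measure G) (ν : Measure H) [SFinite μ] [SFinite ν] :
    Submodule.map₂ (tensorₗ ℂ) (K2 μ) (K2 ν) ≤ K2 (μ.prod ν) := by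
  simp only [K2_eq_span_convGenerators, Submodule.map₂_span_span]
  exact Submodule.span_mono (image2_tensor_convGenerators_subset μ ν)

end K2

theorem tensor_mem_K2_general {G H : Type*}
    [AddCommGroup G] [TopologicalSpace G]
    [LocallyCompactSpace G] [SecondCountableTopology G]
    [MeasurableSpace G]
    [AddCommGroup H] [TopologicalSpace H]
    [LocallyCompactSpace H] [SecondCountableTopology H]
    [MeasurableSpace H]
    (μ : Measure G) [μ.IsAddHaarMeasure]
    (ν : Measure H) [ν.IsAddHaarMeasure]
    (f : G → ℂ) (g : H → ℂ) (hf : f ∈ K2 μ) (hg : g ∈ K2 ν) :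
    (fun p : G × H => f p.1 * g p.2) ∈ K2 (μ.prod ν) :=
  map₂_tensor_K2_le μ ν (Submodule.apply_mem_map₂ (tensorₗ ℂ) hf hg)

theorem tensor_mem_K2 {G H : Type*}
    [AddCommGroup G] [TopologicalSpace G] [IsTopologicalAddGroup G]
    [LocallyCompactSpace G] [SecondCountableTopology G] [T2Space G]
    [MeasurableSpace G] [BorelSpace G]
    [AddCommGroup H] [TopologicalSpace H] [IsTopologicalAddGroup H]
    [LocallyCompactSpace H] [SecondCountableTopology H] [T2Space H]
    [MeasurableSpace H] [BorelSpace H]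
    (μ : Measure G) [μ.IsAddHaarMeasure]
    (ν : Measure H) [ν.IsAddHaarMeasure]
    (f : G → ℂ) (g : H → ℂ) (hf : f ∈ K2 μ) (hg : g ∈ K2 ν) :
    (fun p : G × H => f p.1 * g p.2) ∈ K2 (μ.prod ν) :=
  tensor_mem_K2_general μ ν f g hf hg
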